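/- arXiv:1110.0023 — 2 statements merged into one kernel-verified Lean document; each statement's English description precedes it below -/
import Mathlib

section
/- If M is a minimal model of a Horn constraint program P, then M is a derivable model of P. -/
universe u

/-- A constraint `A = (X, C)`: domain `X` and a family `C` of subsets of `X`. -/
structure Constraint (α : Type u) where
  dom : Set α
  sat : Set (Set α)
  sat_sub : ∀ Y ∈ sat, Y ⊆ dom

/-- `M ⊨ A` iff `M ∩ Dom(A) ∈ C`. -/
def Constraint.Sat {α : Type u} (M : Set α) (A : Constraint α) : Prop :=
  M ∩ A.dom ∈ A.sat

/-- A constraint is monotone if its satisfying family is closed under supersets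
within the domain. -/
def Constraint.Mono {α : Type u} (A : Constraint α) : Prop :=
  ∀ W Y : Set α, W ∈ A.sat → W ⊆ Y → Y ⊆ A.dom → Y ∈ A.sat

/-- A rule `A ← A₁,…,A_k, not(A_{k+1}),…,not(A_m)`. -/
structure Rule (α : Type u) where
  head : Constraint α
  pos : Set (Constraint α)
  neg : Set (Constraint α)

/-- A constraint program is a set of rules. -/
abbrev Program (α : Type u) := Set (Rule α)

def Rule.Horn {α : Type u} (r : Rule α) : Prop := r.neg = ∅

def Rule.Mono {α : Type u} (r : Rule α) : Prop :=
  r.head.Mono ∧ (∀ A ∈ r.pos, A.Mono) ∧ (∀ A ∈ r.neg, A.Mono)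

def Program.Horn {α : Type u} (P : Program α) : Prop := ∀ r ∈ P, r.Horn

def Program.Mono {α : Type u} (P : Program α) : Prop := ∀ r ∈ P, r.Mono

/-- `M` satisfies the body of `r`. -/
def Rule.BodySat {α : Type u} (M : Set α) (r : Rule α) : Prop :=
  (∀ A ∈ r.pos, Constraint.Sat M A) ∧ (∀ A ∈ r.neg, ¬ Constraint.Sat M A)

/-- `P(M)`: the set of `M`-applicable rules of `P`. -/
def Program.app {α : Type u} (P : Program α) (M : Set α) : Program α :=
  {r ∈ P | r.BodySat M}

/-- `hset(r) = Dom(hd(r))`. -/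
def Rule.hset {α : Type u} (r : Rule α) : Set α := r.head.dom

/-- `hset(P)`: union of the headsets of rules of `P`. -/
def Program.hset {α : Type u} (P : Program α) : Set α := ⋃ r ∈ P, r.hset

def Rule.atoms {α : Type u} (r : Rule α) : Set α :=
  r.head.dom ∪ (⋃ A ∈ r.pos, A.dom) ∪ (⋃ A ∈ r.neg, A.dom)

/-- `At(P)`: atoms occurring in domains of constraints of `P`. -/
def Program.atoms {α : Type u} (P : Program α) : Set α := ⋃ r ∈ P, r.atoms

/-- `M` is a model of `P`. -/
def Program.IsModel {α : Type u} (P : Program α) (M : Set α) : Prop :=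
  ∀ r ∈ P, r.BodySat M → Constraint.Sat M r.head

/-- `M` is a supported model of `P`. -/
def Program.Supported {α : Type u} (P : Program α) (M : Set α) : Prop :=
  P.IsModel M ∧ M ⊆ (P.app M).hset

/-- The nondeterministic one-step provability operator `T_P^nd`. -/
def Program.Tnd {α : Type u} (P : Program α) (M : Set α) : Set (Set α) :=
  {M' | M' ⊆ (P.app M).hset ∧ ∀ r ∈ P.app M, Constraint.Sat M' r.head}

/-- A `P`-computation: a transfinite sequence starting at `∅`, increasing, with
each successor step nondeterministically one-step provable, continuous at limits. -/
structure PComputation {α : Type u} (P : Program α) where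
  X : Ordinal.{u} → Set α
  zero : X 0 = ∅
  incr : ∀ o, X o ⊆ X (o + 1)
  step : ∀ o, X (o + 1) ∈ P.Tnd (X o)
  limit : ∀ o : Ordinal.{u}, Order.IsSuccLimit o → X o = ⋃ β < o, X β

/-- The result `R_t` of a computation. -/
def PComputation.result {α : Type u} {P : Program α} (t : PComputation P) : Set α :=
  ⋃ o, t.X o

/-- `M` is a derivable model of `P`: the result of some `P`-computation. -/
def Program.Derivable {α : Type u} (P : Program α) (M : Set α) : Prop :=
  ∃ t : PComputation P, t.result = M

/-- The canonical sequence `t^{P,M}`: `X₀ = ∅`, `X_{β+1} = hset(P(X_β)) ∩ M`,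
unions at limits. -/
noncomputable def canSeq {α : Type u} (P : Program α) (M : Set α) (o : Ordinal.{u}) :
    Set α :=
  Ordinal.limitRecOn o ∅ (fun _ ih => (P.app ih).hset ∩ M)
    (fun o _ ih => ⋃ β : Ordinal.{u}, ⋃ h : β < o, ih β h)

/-- `Can(P,M)`: the result of the canonical computation. -/
noncomputable def Can {α : Type u} (P : Program α) (M : Set α) : Set α :=
  ⋃ o, canSeq P M o

/-- The reduct of a single rule: drop negated literals. -/
def Rule.pos_part {α : Type u} (r : Rule α) : Rule α := ⟨r.head, r.pos, ∅⟩

/-- The reduct `P^M`. -/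
def Program.reduct {α : Type u} (P : Program α) (M : Set α) : Program α :=
  {r' | ∃ r ∈ P, (∀ A ∈ r.neg, ¬ Constraint.Sat M A) ∧ r' = r.pos_part}

/-- `M` is a stable model of `P`: a derivable model of the reduct `P^M`. -/
def Program.Stable {α : Type u} (P : Program α) (M : Set α) : Prop :=
  (P.reduct M).Derivable M

/-- `N ⊨_M P`: `N` is an `M`-maximal model of the Horn program `P`. -/
def Program.MMax {α : Type u} (P : Program α) (M N : Set α) : Prop :=
  N ⊆ M ∧ P.IsModel N ∧ M ∩ (P.app N).hset ⊆ N

/-- `(X,Y)` is an SE-model of `P`. -/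
def Program.SE {α : Type u} (P : Program α) (X Y : Set α) : Prop :=
  X ⊆ Y ∧ P.IsModel Y ∧ (P.reduct Y).MMax Y X

/-- `(X,Y)` is a UE-model of `P`. -/
def Program.UE {α : Type u} (P : Program α) (X Y : Set α) : Prop :=
  P.SE X Y ∧ ∀ X', P.SE X' Y → X ⊆ X' → X = X' ∨ X' = Y

/-- Strong equivalence of monotone-constraint programs. -/
def StrongEq {α : Type u} (P Q : Program α) : Prop :=
  ∀ R : Program α, R.Mono → ∀ M : Set α, (P ∪ R).Stable M ↔ (Q ∪ R).Stable M

/-- The rule `(D,{D}) ←`. -/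
def factRule {α : Type u} (D : Set α) : Rule α :=
  ⟨⟨D, {D}, fun Y hY => by simp only [Set.mem_singleton_iff] at hY; simp [hY]⟩, ∅, ∅⟩

/-- Uniform equivalence of monotone-constraint programs. -/
def UnifEq {α : Type u} (P Q : Program α) : Prop :=
  ∀ D : Set α, ∀ M : Set α,
    (P ∪ {factRule D}).Stable M ↔ (Q ∪ {factRule D}).Stable M

/-- `P` is tight on `M`. -/
def Program.Tight {α : Type u} (P : Program α) (M : Set α) : Prop :=
  ∃ lam : α → Ordinal.{u}, ∀ r ∈ P.app M, ∀ x ∈ M ∩ r.hset,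
    ∀ a ∈ M ∩ (⋃ A ∈ r.pos, A.dom), lam a < lam x


/-!
For a model `M` of a Horn program with monotone constraints, the canonical sequence
`X_{β+1} = hset(P(X_β)) ∩ M` is a `P`-computation: the heads applicable at `X_β ⊆ M` are
satisfied by `M`, and a head only sees atoms of its own domain, which lie in `hset(P(X_β))`.
The sequence grows, so by a cardinality argument it reaches a fixed point, which is then a
model of `P` contained in `M`. Minimality of `M` forces the fixed point, i.e. the result of the
computation, to be `M` itself.
-/

variable {α : Type u}

lemma Constraint.sat_inter_iff {A : Constraint α} {S M : Set α} (h : A.dom ⊆ S) :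
    Constraint.Sat (S ∩ M) A ↔ Constraint.Sat M A := by
  unfold Constraint.Sat
  rw [Set.inter_assoc, Set.inter_eq_right.mpr (Set.inter_subset_right.trans h)]

namespace Program

lemma dom_head_subset_hset {P : Program α} {r : Rule α} (hr : r ∈ P) : r.head.dom ⊆ P.hset :=
  Set.subset_biUnion_of_mem (u := Rule.hset) hr

lemma hset_mono {P Q : Program α} (h : P ⊆ Q) : P.hset ⊆ Q.hset :=
  Set.biUnion_subset_biUnion_left h

lemma app_mono {P : Program α} (hHorn : P.Horn) (hMono : P.Mono) {X Y : Set α} (hXY : X ⊆ Y) :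
    P.app X ⊆ P.app Y := by
  rintro r ⟨hrP, hpos, -⟩
  refine ⟨hrP, fun A hA => ?_, fun A hA => absurd (hHorn r hrP ▸ hA) (Set.notMem_empty A)⟩
  exact (hMono r hrP).2.1 A hA _ _ (hpos A hA) (Set.inter_subset_inter_left _ hXY)
    Set.inter_subset_right

end Program

lemma Ordinal.monotone_of_subset_add_one {f : Ordinal.{u} → Set α}
    (hsucc : ∀ o, f o ⊆ f (o + 1))
    (hlim : ∀ o, Order.IsSuccLimit o → f o = ⋃ β < o, f β) : Monotone f := by
  intro β o hβo
  induction o using Ordinal.limitRecOn with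
  | zero => rw [nonpos_iff_eq_zero.mp hβo]
  | add_one o ih =>
    rcases hβo.lt_or_eq with hlt | rfl
    · exact (ih (Order.lt_add_one_iff.mp hlt)).trans (hsucc o)
    · rfl
  | limit o ho _ =>
    rcases hβo.lt_or_eq with hlt | rfl
    · rw [hlim o ho]; exact Set.subset_biUnion_of_mem hlt
    · rfl

lemma Ordinal.exists_iUnion_eq_of_monotone {f : Ordinal.{u} → Set α} (hf : Monotone f) :
    ∃ o, ⋃ β, f β = f o := by
  choose g hg using fun a : ⋃ β, f β => Set.mem_iUnion.mp a.2
  refine ⟨⨆ a, g a, (Set.iUnion_subset_iff.mpr fun β => ?_).antisymm (Set.subset_iUnion f _)⟩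
  · intro a ha
    have ha' : a ∈ ⋃ β, f β := Set.mem_iUnion_of_mem β ha
    exact hf (Ordinal.le_iSup g ⟨a, ha'⟩) (hg ⟨a, ha'⟩)

section canSeq

variable (P : Program α) (M : Set α)

lemma canSeq_zero : canSeq P M 0 = ∅ :=
  Ordinal.limitRecOn_zero ..

lemma canSeq_add_one (o : Ordinal.{u}) : canSeq P M (o + 1) = (P.app (canSeq P M o)).hset ∩ M :=
  Ordinal.limitRecOn_add_one ..

lemma canSeq_limit (o : Ordinal.{u}) (ho : Order.IsSuccLimit o) :
    canSeq P M o = ⋃ β < o, canSeq P M β :=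
  Ordinal.limitRecOn_limit _ _ _ _ ho

lemma canSeq_subset (o : Ordinal.{u}) : canSeq P M o ⊆ M := by
  induction o using Ordinal.limitRecOn with
  | zero => simp [canSeq_zero]
  | add_one o _ => rw [canSeq_add_one]; exact Set.inter_subset_right
  | limit o ho ih => rw [canSeq_limit P M o ho]; exact Set.iUnion₂_subset ih

variable {P}

lemma canSeq_subset_add_one (hHorn : P.Horn) (hMono : P.Mono) (o : Ordinal.{u}) :
    canSeq P M o ⊆ canSeq P M (o + 1) := by
  have step {β γ : Ordinal.{u}} (h : canSeq P M β ⊆ canSeq P M γ) :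
      canSeq P M (β + 1) ⊆ canSeq P M (γ + 1) := by
    rw [canSeq_add_one, canSeq_add_one]
    exact Set.inter_subset_inter_left _ (Program.hset_mono (Program.app_mono hHorn hMono h))
  induction o using Ordinal.limitRecOn with
  | zero => simp [canSeq_zero]
  | add_one o ih => exact step ih
  | limit o ho ih =>
    have below : ∀ β < o, canSeq P M β ⊆ canSeq P M o := fun β hβ => by
      rw [canSeq_limit P M o ho]; exact Set.subset_biUnion_of_mem hβ
    conv_lhs => rw [canSeq_limit P M o ho]
    exact Set.iUnion₂_subset fun β hβ => (ih β hβ).trans (step (below β hβ))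

lemma canSeq_monotone (hHorn : P.Horn) (hMono : P.Mono) : Monotone (canSeq P M) :=
  Ordinal.monotone_of_subset_add_one (canSeq_subset_add_one M hHorn hMono) (canSeq_limit P M)

end canSeq

lemma canSeq_add_one_sat_head {P : Program α} {M : Set α} (hHorn : P.Horn) (hMono : P.Mono)
    (hMod : P.IsModel M) {o : Ordinal.{u}} {r : Rule α} (hr : r ∈ P.app (canSeq P M o)) :
    Constraint.Sat (canSeq P M (o + 1)) r.head := by
  have hrM : r ∈ P.app M := Program.app_mono hHorn hMono (canSeq_subset P M o) hr
  rw [canSeq_add_one, Constraint.sat_inter_iff (Program.dom_head_subset_hset hr)]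
  exact hMod r hrM.1 hrM.2

noncomputable def canComputation {P : Program α} (hHorn : P.Horn) (hMono : P.Mono) {M : Set α}
    (hMod : P.IsModel M) : PComputation P where
  X := canSeq P M
  zero := canSeq_zero P M
  incr := canSeq_subset_add_one M hHorn hMono
  step o := ⟨by rw [canSeq_add_one]; exact Set.inter_subset_left,
    fun _ hr => canSeq_add_one_sat_head hHorn hMono hMod hr⟩
  limit := canSeq_limit P M

lemma can_subset (P : Program α) (M : Set α) : Can P M ⊆ M :=
  Set.iUnion_subset (canSeq_subset P M)

lemma isModel_can {P : Program α} (hHorn : P.Horn) (hMono : P.Mono) {M : Set α}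
    (hMod : P.IsModel M) : P.IsModel (Can P M) := by
  obtain ⟨o, ho⟩ := Ordinal.exists_iUnion_eq_of_monotone (canSeq_monotone M hHorn hMono)
  have hfix : canSeq P M (o + 1) = canSeq P M o :=
    ((Set.subset_iUnion (canSeq P M) _).trans ho.le).antisymm
      (canSeq_subset_add_one M hHorn hMono o)
  intro r hrP hbody
  rw [Can, ho] at hbody
  rw [Can, ho, ← hfix]
  exact canSeq_add_one_sat_head hHorn hMono hMod ⟨hrP, hbody⟩

/-- Every minimal model of a Horn constraint program is derivable. -/
theorem minimal_model_derivable {α : Type u} (P : Program α) (hHorn : P.Horn)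
    (hMono : P.Mono) (M : Set α) (hMod : P.IsModel M)
    (hMin : ∀ N : Set α, P.IsModel N → N ⊆ M → N = M) :
    P.Derivable M :=
  ⟨canComputation hHorn hMono hMod, hMin _ (isModel_can hHorn hMono hMod) (can_subset P M)⟩
end

section
/- If monotone-constraint programs P and Q are strongly equivalent, then P and Q have the same models. -/
universe u

/-!
A model `M` of `P` becomes a stable model of `P ∪ {(M,{M}) ←}`: the fact derives all of `M`
in one step, and as the positive bodies are monotone, every rule of the reduct applicable at a
subset of `M` has its head satisfied by the model `M`.
Conversely every stable model of a program is a model of it. Adding the monotone fact rule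
for `M` to both sides of a strong equivalence thus transfers "`M` is a model" from `P` to `Q`.
-/

namespace PComputation

variable {α : Type u} {P : Program α} (t : PComputation P)

theorem monotone : Monotone t.X := by
  intro β o
  induction o using Ordinal.limitRecOn with
  | zero => intro hβ; rw [nonpos_iff_eq_zero.mp hβ]
  | add_one o ih =>
    intro hβ
    rcases hβ.eq_or_lt with rfl | hlt
    · rfl
    · rw [Order.lt_add_one_iff] at hlt
      exact (ih hlt).trans (t.incr o)
  | limit o ho _ =>
    intro hβ
    rcases hβ.eq_or_lt with rfl | hlt
    · rfl
    · rw [t.limit o ho]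
      exact Set.subset_biUnion_of_mem hlt

theorem exists_X_eq_result : ∃ o, t.X o = t.result := by
  have hstage : ∀ a : t.result, ∃ o, (a : α) ∈ t.X o := fun a => Set.mem_iUnion.mp a.2
  choose φ hφ using hstage
  refine ⟨⨆ a, φ a, subset_antisymm (Set.subset_iUnion t.X _) fun a ha => ?_⟩
  exact t.monotone (Ordinal.le_iSup φ ⟨a, ha⟩) (hφ ⟨a, ha⟩)

theorem result_mem_Tnd : t.result ∈ P.Tnd t.result := by
  obtain ⟨o, ho⟩ := t.exists_X_eq_result
  have hsucc : t.X (o + 1) = t.result :=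
    subset_antisymm (Set.subset_iUnion t.X _) (ho ▸ t.incr o)
  simpa only [ho, hsucc] using t.step o

end PComputation

theorem Program.Derivable.sat_head {α : Type u} {P : Program α} {M : Set α}
    (h : P.Derivable M) : ∀ r ∈ P.app M, Constraint.Sat M r.head := by
  obtain ⟨t, rfl⟩ := h
  exact t.result_mem_Tnd.2

theorem Program.derivable_of_mem_Tnd {α : Type u} {P : Program α} {M : Set α}
    (h₀ : M ∈ P.Tnd ∅) (hM : M ∈ P.Tnd M) : P.Derivable M := by
  classical
  let X : Ordinal.{u} → Set α := fun o => if o = 0 then ∅ else M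
  have hX_le : ∀ o, X o ⊆ M := fun o => by dsimp only [X]; split_ifs <;> simp
  have hX_one : X 1 = M := if_neg one_ne_zero
  have hX_succ : ∀ o, X (o + 1) = M := fun o => if_neg (Order.succ_ne_bot o)
  refine ⟨⟨X, if_pos rfl, fun o => ?_, fun o => ?_, fun o ho => ?_⟩, ?_⟩
  · exact (hX_succ o).symm ▸ hX_le o
  · rw [hX_succ]
    dsimp only [X]
    split_ifs
    exacts [h₀, hM]
  · have hXo : X o = M := if_neg ho.ne_bot
    refine hXo ▸ subset_antisymm (fun a ha => ?_) (Set.iUnion₂_subset fun β _ => hX_le β)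
    exact Set.mem_iUnion₂.mpr
      ⟨1, Ordinal.one_lt_of_isSuccLimit ho, (hX_one.symm ▸ ha : a ∈ X 1)⟩
  · refine subset_antisymm (Set.iUnion_subset hX_le) fun a ha => ?_
    exact Set.mem_iUnion.mpr ⟨1, (hX_one.symm ▸ ha : a ∈ X 1)⟩

theorem Constraint.Mono.sat_of_subset {α : Type u} {A : Constraint α} (hA : A.Mono)
    {N M : Set α} (hN : Constraint.Sat N A) (hNM : N ⊆ M) : Constraint.Sat M A :=
  hA _ _ hN (Set.inter_subset_inter_left _ hNM) Set.inter_subset_right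

theorem Program.IsModel.of_subset {α : Type u} {P P' : Program α} {M : Set α}
    (h : P'.IsModel M) (hPP' : P ⊆ P') : P.IsModel M :=
  fun r hr => h r (hPP' hr)

theorem Program.Stable.isModel {α : Type u} {P : Program α} {M : Set α} (h : P.Stable M) :
    P.IsModel M := fun r hr hbody =>
  h.sat_head r.pos_part ⟨⟨r, hr, hbody.2, rfl⟩, hbody.1, fun _ hA => hA.elim⟩

theorem factRule_mono {α : Type u} (M : Set α) : (factRule M).Mono := by
  refine ⟨fun W Y hW hWY hY => ?_, fun _ hA => hA.elim, fun _ hA => hA.elim⟩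
  have hWM : W = M := hW
  exact subset_antisymm hY (hWM ▸ hWY)

theorem singleton_factRule_mono {α : Type u} (M : Set α) : Program.Mono {factRule M} := by
  rintro r rfl
  exact factRule_mono M

theorem mem_Tnd_reduct_union_factRule {α : Type u} {P : Program α} {M N : Set α}
    (hP : ∀ r ∈ P, ∀ A ∈ r.pos, A.Mono) (hM : P.IsModel M) (hN : N ⊆ M) :
    M ∈ ((P ∪ {factRule M}).reduct M).Tnd N := by
  have hfact : factRule M ∈ ((P ∪ {factRule M}).reduct M).app N :=
    ⟨⟨factRule M, Or.inr rfl, fun _ hA => hA.elim, rfl⟩, fun _ hA => hA.elim,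
      fun _ hA => hA.elim⟩
  refine ⟨fun a ha => Set.mem_biUnion hfact ha, ?_⟩
  rintro _ ⟨⟨r, hr | rfl, hneg, rfl⟩, hpos, -⟩
  · exact hM r hr ⟨fun A hA => (hP r hr A hA).sat_of_subset (hpos A hA) hN, hneg⟩
  · exact Set.inter_self M

theorem Program.IsModel.stable_union_factRule {α : Type u} {P : Program α} {M : Set α}
    (hP : ∀ r ∈ P, ∀ A ∈ r.pos, A.Mono) (hM : P.IsModel M) :
    (P ∪ {factRule M}).Stable M :=
  Program.derivable_of_mem_Tnd (mem_Tnd_reduct_union_factRule hP hM (Set.empty_subset M))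
    (mem_Tnd_reduct_union_factRule hP hM subset_rfl)

theorem StrongEq.symm {α : Type u} {P Q : Program α} (h : StrongEq P Q) : StrongEq Q P :=
  fun R hR M => (h R hR M).symm

theorem StrongEq.isModel {α : Type u} {P Q : Program α} (hP : P.Mono) (h : StrongEq P Q)
    {M : Set α} (hM : P.IsModel M) : Q.IsModel M :=
  have hstable := (h _ (singleton_factRule_mono M) M).mp
    (hM.stable_union_factRule fun r hr => (hP r hr).2.1)
  hstable.isModel.of_subset Set.subset_union_left

/-- Strongly equivalent programs have the same models. -/
theorem strong_equiv_same_models {α : Type u} (P Q : Program α) (hP : P.Mono)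
    (hQ : Q.Mono) (h : StrongEq P Q) :
    ∀ M : Set α, P.IsModel M ↔ Q.IsModel M :=
  fun _ => ⟨h.isModel hP, h.symm.isModel hQ⟩
end
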